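/- arXiv:2508.11306 — 3 statements merged into one kernel-verified Lean document; each statement's English description precedes it below -/
import Mathlib

section
/- Fix an integer k′ ≥ 0. Suppose F_{j−1} ∘ F_j = 0 for all j, the null-homotopy relations K_j ∘ F_j + F_{j+1} ∘ K_{j+1} = w·id_{M_j} hold for all j ∈ ℤ, the higher-homotopy recursion Rec(a, i) holds for all a ≥ 1 and all i ∈ ℤ, and moreover F_{−1} = 0 and F_{2k′+1} = 0. Define block entries, for 0 ≤ p, q ≤ k′: A_{p,q} := K^{(p−q)}_{2q} : M_{2q−1} → M_{2p} when q ≤ p, A_{p,p+1} := F_{2p+1} : M_{2p+1} → M_{2p} when p < k′, and A_{p,q} := 0 otherwise; B_{q,p} := F_{2p} : M_{2p} → M_{2p−1} when q = p, B_{q,p} := K^{(q−p−1)}_{2p+1} : M_{2p} → M_{2q−1} when q > p, and B_{q,p} := 0 when q < p. Then the block matrices (A, B) form a matrix factorization of w: for all 0 ≤ p, p′ ≤ k′, Σ_{q=0}^{k′} A_{p,q} ∘ B_{q,p′} equals w·id_{M_{2p′}} if p = p′ and 0 otherwise, and for all 0 ≤ q, q′ ≤ k′, Σ_{p=0}^{k′}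 B_{q,p} ∘ A_{p,q′} equals w·id_{M_{2q′−1}} if q = q′ and 0 otherwise. -/
/-! Set `K^{(-1)} := F`, so that `D := F + Σ_a K^{(a)}` is a single map of the total module
`⊕_i M_i` whose component `M_s → M_t` has odd degree `t - s`. The hypotheses say exactly that
`D² = w`: its components of degree `-2`, `0` and `2a ≥ 2` are `F ∘ F = 0`, the null-homotopy
relation and `Rec(a, ·)`. The block matrix `(A, B)` is `D` on `M_{-1} ⊕ M_0 ⊕ ⋯ ⊕ M_{2k'}`,
split into odd and even parts, so an entry of `AB` or `BA` is the matching component of `D²`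
except for the paths through `M_{-2}` or `M_{2k'+1}`, which vanish since `F_{-1} = F_{2k'+1} = 0`.
-/

/-- Transport of a linear map along equalities of the indices of a `ℤ`-indexed
family of modules. -/
def lcast {R : Type*} [CommRing R] {M : ℤ → Type*}
    [∀ i, AddCommGroup (M i)] [∀ i, Module R (M i)]
    {i i' j j' : ℤ} (hi : i = i') (hj : j = j')
    (f : M i →ₗ[R] M j) : M i' →ₗ[R] M j' := by
  subst hi; subst hj; exact f

/-- The higher-homotopy recursion `Rec(a, i)` (for `a ≥ 1`). -/
def Rec {R : Type*} [CommRing R] {M : ℤ → Type*}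
    [∀ i, AddCommGroup (M i)] [∀ i, Module R (M i)]
    (F : ∀ i : ℤ, M i →ₗ[R] M (i - 1))
    (Ka : ∀ (a : ℕ) (i : ℤ), M (i - 1) →ₗ[R] M (i + 2 * a))
    (a : ℕ) (ha : 1 ≤ a) (i : ℤ) : Prop :=
  (∑ p ∈ (Finset.HasAntidiagonal.antidiagonal (a - 1)).attach,
      lcast rfl
        (show i + 2 * (p.1.2 : ℤ) + 1 + 2 * (p.1.1 : ℤ) = i + 2 * (a : ℤ) - 1 by
          have hp := Finset.HasAntidiagonal.mem_antidiagonal.mp p.2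
          omega)
        ((Ka p.1.1 (i + 2 * (p.1.2 : ℤ) + 1)).comp
          (lcast rfl (show i + 2 * (p.1.2 : ℤ) = i + 2 * (p.1.2 : ℤ) + 1 - 1 by ring)
            (Ka p.1.2 i))))
    + (F (i + 2 * a)).comp (Ka a i)
    + lcast rfl (show i - 1 + 2 * (a : ℤ) = i + 2 * (a : ℤ) - 1 by ring)
        ((Ka a (i - 1)).comp (F (i - 1)))
  = 0

/-- The block entry `A_{p,q}` : `M_{2q−1} → M_{2p}`; it is `K^{(p−q)}_{2q}` when
`q ≤ p`, `F_{2p+1}` when `q = p+1` and `p < k′`, and `0` otherwise. -/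
def blockA {R : Type*} [CommRing R] {M : ℤ → Type*}
    [∀ i, AddCommGroup (M i)] [∀ i, Module R (M i)]
    (F : ∀ i : ℤ, M i →ₗ[R] M (i - 1))
    (Ka : ∀ (a : ℕ) (i : ℤ), M (i - 1) →ₗ[R] M (i + 2 * a))
    (k' p q : ℕ) : M (2 * q - 1) →ₗ[R] M (2 * p) :=
  if h : q ≤ p then
    lcast rfl (show 2 * (q : ℤ) + 2 * ((p - q : ℕ) : ℤ) = 2 * (p : ℤ) by omega)
      (Ka (p - q) (2 * q))
  else if h2 : q = p + 1 ∧ p < k' then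
    lcast (show 2 * (p : ℤ) + 1 = 2 * (q : ℤ) - 1 by omega)
      (show 2 * (p : ℤ) + 1 - 1 = 2 * (p : ℤ) by ring)
      (F (2 * p + 1))
  else 0

/-- The block entry `B_{q,p}` : `M_{2p} → M_{2q−1}`; it is `F_{2p}` when `q = p`,
`K^{(q−p−1)}_{2p+1}` when `q > p`, and `0` when `q < p`. -/
def blockB {R : Type*} [CommRing R] {M : ℤ → Type*}
    [∀ i, AddCommGroup (M i)] [∀ i, Module R (M i)]
    (F : ∀ i : ℤ, M i →ₗ[R] M (i - 1))
    (Ka : ∀ (a : ℕ) (i : ℤ), M (i - 1) →ₗ[R] M (i + 2 * a))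
    (q p : ℕ) : M (2 * p) →ₗ[R] M (2 * q - 1) :=
  if h : q = p then
    lcast rfl (show 2 * (p : ℤ) - 1 = 2 * (q : ℤ) - 1 by omega) (F (2 * p))
  else if h2 : p < q then
    lcast (show 2 * (p : ℤ) + 1 - 1 = 2 * (p : ℤ) by ring)
      (show 2 * (p : ℤ) + 1 + 2 * ((q - p - 1 : ℕ) : ℤ) = 2 * (q : ℤ) - 1 by omega)
      (Ka (q - p - 1) (2 * p + 1))
  else 0

open Finset

theorem sum_Icc_eq_sum_range_of_odd {β : Type*} [AddCommMonoid β] (g : ℤ → β) (c : ℤ)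
    (n : ℕ) (hg : ∀ m, Odd (m - c) → g m = 0) :
    ∑ m ∈ Icc c (c + 2 * n), g m = ∑ j ∈ range (n + 1), g (c + 2 * j) := by
  have hinj : Set.InjOn (fun j : ℕ => c + 2 * (j : ℤ)) (range (n + 1)) := by
    intro x _ y _ h; simp only at h; omega
  rw [← sum_image hinj]
  refine (sum_subset (fun m hm => ?_) fun m hm hm' => hg m ?_).symm
  · obtain ⟨j, hj, rfl⟩ := mem_image.mp hm
    simp only [mem_range] at hj; simp only [mem_Icc]; omega
  · simp only [mem_Icc] at hm
    simp only [mem_image, mem_range, not_exists, not_and] at hm'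
    rw [Int.odd_iff]
    have := hm' ((m - c) / 2).toNat
    omega

section

variable {R : Type*} [CommRing R] {M : ℤ → Type*} [∀ i, AddCommGroup (M i)]
  [∀ i, Module R (M i)]

theorem lcast_lcast {i i' i'' j j' j'' : ℤ} (hi : i = i') (hj : j = j') (hi' : i' = i'')
    (hj' : j' = j'') (f : M i →ₗ[R] M j) :
    lcast hi' hj' (lcast hi hj f) = lcast (hi.trans hi') (hj.trans hj') f := by
  subst hi hj hi' hj'; rfl

theorem lcast_comp_lcast {i i' j j' j'' k k' : ℤ} (hi : i = i') (hj : j = j'') (hj' : j' = j'')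
    (hk : k = k') (g : M j' →ₗ[R] M k) (f : M i →ₗ[R] M j) :
    (lcast hj' hk g).comp (lcast hi hj f)
      = lcast hi hk (g.comp (lcast rfl (hj.trans hj'.symm) f)) := by
  subst hi hj hk hj'; rfl

theorem lcast_zero {i i' j j' : ℤ} (hi : i = i') (hj : j = j') :
    lcast hi hj (0 : M i →ₗ[R] M j) = 0 := by
  subst hi hj; rfl

theorem lcast_add {i i' j j' : ℤ} (hi : i = i') (hj : j = j') (f g : M i →ₗ[R] M j) :
    lcast hi hj (f + g) = lcast hi hj f + lcast hi hj g := by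
  subst hi hj; rfl

theorem lcast_sum {ι : Type*} {i i' j j' : ℤ} (hi : i = i') (hj : j = j') (s : Finset ι)
    (f : ι → M i →ₗ[R] M j) :
    lcast hi hj (∑ x ∈ s, f x) = ∑ x ∈ s, lcast hi hj (f x) := by
  subst hi hj; rfl

section TotalDiff

variable (F : ∀ i : ℤ, M i →ₗ[R] M (i - 1))
  (Ka : ∀ (a : ℕ) (i : ℤ), M (i - 1) →ₗ[R] M (i + 2 * a))

/-- The component `M_s → M_t` of `F + Σ_a K^{(a)}`: `F_s` if `t = s - 1`, `K^{(a)}_{s+1}` if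
`t = s + 2a + 1`, and `0` otherwise. -/
def totalDiff (s t : ℤ) : M s →ₗ[R] M t :=
  if h : s - 1 = t then lcast rfl h (F s)
  else if h' : s < t ∧ (t - s) % 2 = 1 then
    lcast (add_sub_cancel_right s 1) (by omega : s + 1 + 2 * (((t - s) / 2).toNat : ℤ) = t)
      (Ka ((t - s) / 2).toNat (s + 1))
  else 0

theorem totalDiff_of_F {i s t : ℤ} (hi : i = s) (hj : i - 1 = t) :
    totalDiff F Ka s t = lcast hi hj (F i) := by
  subst hi hj; exact dif_pos rfl

theorem totalDiff_of_Ka (a : ℕ) (i : ℤ) {s t : ℤ} (hi : i - 1 = s) (hj : i + 2 * a = t) :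
    totalDiff F Ka s t = lcast hi hj (Ka a i) := by
  obtain rfl : i = s + 1 := by omega
  subst hj
  rw [totalDiff, dif_neg (by omega), dif_pos (by omega)]
  have key : ∀ b : ℕ, b = a → ∀ h : s + 1 + 2 * (b : ℤ) = s + 1 + 2 * a,
      lcast hi h (Ka b (s + 1)) = lcast hi rfl (Ka a (s + 1)) := by
    rintro b rfl h; rfl
  exact key _ (by omega) _

theorem totalDiff_eq_zero {s t : ℤ} (h : t < s - 1 ∨ Even (t - s)) :
    totalDiff F Ka s t = 0 := by
  rw [Int.even_iff] at h
  rw [totalDiff, dif_neg (by omega), dif_neg (by omega)]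

theorem totalDiff_comp_totalDiff_eq_zero {s m t : ℤ}
    (h : m < s - 1 ∨ t < m - 1 ∨ Even (m - s) ∨ Even (t - m)) :
    (totalDiff F Ka m t).comp (totalDiff F Ka s m) = 0 := by
  rcases h with h | h | h | h
  · rw [totalDiff_eq_zero F Ka (.inl h), LinearMap.comp_zero]
  · rw [totalDiff_eq_zero F Ka (.inl h), LinearMap.zero_comp]
  · rw [totalDiff_eq_zero F Ka (.inr h), LinearMap.comp_zero]
  · rw [totalDiff_eq_zero F Ka (.inr h), LinearMap.zero_comp]

end TotalDiff

section Relations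

variable {F : ∀ i : ℤ, M i →ₗ[R] M (i - 1)}
  {Ka : ∀ (a : ℕ) (i : ℤ), M (i - 1) →ₗ[R] M (i + 2 * a)}

theorem totalDiff_comp_totalDiff_sub_one (hcomplex : ∀ j : ℤ, (F (j - 1)).comp (F j) = 0)
    (s : ℤ) : (totalDiff F Ka (s - 1) (s - 1 - 1)).comp (totalDiff F Ka s (s - 1)) = 0 := by
  rw [totalDiff_of_F F Ka rfl rfl, totalDiff_of_F F Ka rfl rfl]
  exact hcomplex s

theorem totalDiff_homotopy {w : R} {K : ∀ i : ℤ, M (i - 1) →ₗ[R] M i}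
    (hK0 : ∀ i : ℤ, Ka 0 i = lcast rfl (show i = i + 2 * ((0 : ℕ) : ℤ) by simp) (K i))
    (hhomotopy : ∀ j : ℤ,
      (K j).comp (F j)
        + lcast (show j + 1 - 1 = j by ring) (show j + 1 - 1 = j by ring)
            ((F (j + 1)).comp (K (j + 1)))
      = w • (LinearMap.id : M j →ₗ[R] M j)) (s : ℤ) :
    (totalDiff F Ka (s - 1) s).comp (totalDiff F Ka s (s - 1))
      + (totalDiff F Ka (s + 1) s).comp (totalDiff F Ka s (s + 1)) = w • LinearMap.id := by
  rw [totalDiff_of_Ka F Ka 0 s rfl (by simp), totalDiff_of_F F Ka (s := s) rfl rfl,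
    totalDiff_of_F F Ka (s := s + 1) rfl (by ring),
    totalDiff_of_Ka F Ka 0 (s + 1) (by ring) (by simp), hK0, hK0, lcast_lcast, lcast_lcast,
    lcast_comp_lcast, lcast_comp_lcast]
  exact hhomotopy s

theorem totalDiff_rec {a : ℕ} (ha : 1 ≤ a) {s t : ℤ} (ht : t = s + 2 * a)
    (hrec : Rec F Ka a ha (s + 1)) :
    ∑ j ∈ range a, (totalDiff F Ka (s + 1 + 2 * j) t).comp (totalDiff F Ka s (s + 1 + 2 * j))
      + (totalDiff F Ka (t + 1) t).comp (totalDiff F Ka s (t + 1))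
      + (totalDiff F Ka (s - 1) t).comp (totalDiff F Ka s (s - 1)) = 0 := by
  subst ht
  have h1 : s + 1 - 1 = s := by ring
  have h2 : s + 1 + 2 * (a : ℤ) - 1 = s + 2 * a := by ring
  rw [Rec] at hrec
  have hrec' := congrArg (lcast h1 h2) hrec
  rw [lcast_zero, lcast_add, lcast_add, lcast_sum] at hrec'
  rw [← hrec']
  congr 1
  congr 1
  · calc _ = ∑ x ∈ antidiagonal (a - 1), (totalDiff F Ka (s + 1 + 2 * x.2) (s + 2 * a)).comp
            (totalDiff F Ka s (s + 1 + 2 * x.2)) := by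
          rw [Nat.antidiagonal_eq_map', sum_map, Nat.sub_add_cancel ha]
          rfl
      _ = _ := by
          rw [← sum_attach]
          refine sum_congr rfl fun x _ => ?_
          have hx := mem_antidiagonal.mp x.2
          rw [totalDiff_of_Ka F Ka x.1.1 (s + 1 + 2 * x.1.2 + 1) (by ring) (by omega),
            totalDiff_of_Ka F Ka x.1.2 (s + 1) h1 rfl, lcast_comp_lcast, lcast_lcast]
  · rw [totalDiff_of_F F Ka (i := s + 1 + 2 * a) (by ring) (by ring),
      totalDiff_of_Ka F Ka a (s + 1) h1 (by ring), lcast_comp_lcast]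
    rfl
  · rw [totalDiff_of_F F Ka h1 (by ring),
      totalDiff_of_Ka F Ka a (s + 1 - 1) (by ring) (by ring), lcast_comp_lcast, lcast_lcast]
    rfl

theorem sum_totalDiff_comp_totalDiff {w : R} {K : ∀ i : ℤ, M (i - 1) →ₗ[R] M i}
    (hK0 : ∀ i : ℤ, Ka 0 i = lcast rfl (show i = i + 2 * ((0 : ℕ) : ℤ) by simp) (K i))
    (hcomplex : ∀ j : ℤ, (F (j - 1)).comp (F j) = 0)
    (hhomotopy : ∀ j : ℤ,
      (K j).comp (F j)
        + lcast (show j + 1 - 1 = j by ring) (show j + 1 - 1 = j by ring)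
            ((F (j + 1)).comp (K (j + 1)))
      = w • (LinearMap.id : M j →ₗ[R] M j))
    (hrec : ∀ (a : ℕ) (ha : 1 ≤ a) (i : ℤ), Rec F Ka a ha i) (s t : ℤ) :
    ∑ m ∈ Icc (s - 1) (t + 1), (totalDiff F Ka m t).comp (totalDiff F Ka s m)
      = if h : s = t then lcast rfl h (w • LinearMap.id) else 0 := by
  set g : ℤ → (M s →ₗ[R] M t) := fun m => (totalDiff F Ka m t).comp (totalDiff F Ka s m)
  rcases (Int.even_or_odd (t - s)).symm with hpar | hpar
  · rw [dif_neg (by rintro rfl; simp at hpar)]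
    refine sum_eq_zero fun m _ => totalDiff_comp_totalDiff_eq_zero F Ka ?_
    rw [Int.odd_iff] at hpar
    rw [Int.even_iff, Int.even_iff]
    omega
  rcases le_or_gt s t with hst | hst
  · obtain ⟨a, ht⟩ : ∃ a : ℕ, t = s + 2 * a :=
      ⟨((t - s) / 2).toNat, by rw [Int.even_iff] at hpar; omega⟩
    have hodd : ∀ m, Odd (m - (s - 1)) → g m = 0 := fun m hm => by
      refine totalDiff_comp_totalDiff_eq_zero F Ka (.inr (.inr (.inl ?_)))
      rw [Int.odd_iff] at hm
      rw [Int.even_iff]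
      omega
    rw [show t + 1 = s - 1 + 2 * ((a + 1 : ℕ) : ℤ) by push_cast; omega,
      sum_Icc_eq_sum_range_of_odd g _ _ hodd, sum_range_succ, sum_range_succ',
      sum_congr rfl fun j _ =>
        congrArg g (show s - 1 + 2 * ((j + 1 : ℕ) : ℤ) = s + 1 + 2 * j by push_cast; ring),
      show s - 1 + 2 * ((0 : ℕ) : ℤ) = s - 1 by simp,
      show s - 1 + 2 * ((a + 1 : ℕ) : ℤ) = t + 1 by push_cast; omega]
    rcases Nat.eq_zero_or_pos a with rfl | ha
    · obtain rfl : t = s := by simpa using ht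
      rw [dif_pos rfl, sum_range_zero, zero_add]
      exact totalDiff_homotopy hK0 hhomotopy _
    · rw [dif_neg (by omega), add_right_comm]
      exact totalDiff_rec ha ht (hrec a ha (s + 1))
  · rw [Int.even_iff] at hpar
    rcases (by omega : t = s - 1 - 1 ∨ t < s - 1 - 1) with rfl | hlt
    · rw [dif_neg (by omega), show s - 1 - 1 + 1 = s - 1 by ring, Icc_self, sum_singleton]
      exact totalDiff_comp_totalDiff_sub_one hcomplex s
    · rw [dif_neg (by omega), Icc_eq_empty (by omega), sum_empty]

end Relations

section Blocks

variable (F : ∀ i : ℤ, M i →ₗ[R] M (i - 1))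
  (Ka : ∀ (a : ℕ) (i : ℤ), M (i - 1) →ₗ[R] M (i + 2 * a))

theorem blockA_eq_totalDiff {k' p q : ℕ} (hq : q ≤ k') :
    blockA F Ka k' p q = totalDiff F Ka (2 * q - 1) (2 * p) := by
  unfold blockA
  split_ifs with h1 h2
  · exact (totalDiff_of_Ka F Ka (p - q) (2 * q) rfl _).symm
  · exact (totalDiff_of_F F Ka _ _).symm
  · exact (totalDiff_eq_zero F Ka (.inl (by omega))).symm

theorem blockB_eq_totalDiff {q p : ℕ} :
    blockB F Ka q p = totalDiff F Ka (2 * p) (2 * q - 1) := by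
  unfold blockB
  split_ifs with h1 h2
  · exact (totalDiff_of_F F Ka rfl _).symm
  · exact (totalDiff_of_Ka F Ka (q - p - 1) (2 * p + 1) _ _).symm
  · exact (totalDiff_eq_zero F Ka (.inl (by omega))).symm

theorem sum_totalDiff_comp_totalDiff_eq_sum_Icc {s t : ℤ} (J : Finset ℤ)
    (hJ : ∀ m ∈ Icc (s - 1) (t + 1), m ∉ J →
      (totalDiff F Ka m t).comp (totalDiff F Ka s m) = 0) :
    ∑ m ∈ J, (totalDiff F Ka m t).comp (totalDiff F Ka s m)
      = ∑ m ∈ Icc (s - 1) (t + 1), (totalDiff F Ka m t).comp (totalDiff F Ka s m) := by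
  refine sum_congr_of_eq_on_inter (fun m _ hm => totalDiff_comp_totalDiff_eq_zero F Ka ?_) hJ
    fun _ _ _ => rfl
  simp only [mem_Icc] at hm
  omega

theorem sum_blockA_comp_blockB {k' p p' : ℕ} (hFtop : F (2 * (k' : ℤ) + 1) = 0)
    (hp : p ≤ k') :
    ∑ q ∈ range (k' + 1), (blockA F Ka k' p q).comp (blockB F Ka q p')
      = ∑ m ∈ Icc (2 * (p' : ℤ) - 1) (2 * p + 1),
          (totalDiff F Ka m (2 * p)).comp (totalDiff F Ka (2 * p') m) := by
  have hinj : Set.InjOn (fun q : ℕ => 2 * (q : ℤ) - 1) (range (k' + 1)) :=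
    fun x _ y _ h => by simp only at h; omega
  rw [← sum_totalDiff_comp_totalDiff_eq_sum_Icc F Ka ((range (k' + 1)).image _), sum_image hinj]
  · refine sum_congr rfl fun q hq => ?_
    rw [blockA_eq_totalDiff F Ka (mem_range_succ_iff.mp hq), blockB_eq_totalDiff]
  intro m hm hmJ
  rcases Int.even_or_odd (m - 2 * p') with he | ho
  · exact totalDiff_comp_totalDiff_eq_zero F Ka (.inr (.inr (.inl he)))
  simp only [mem_image, mem_range, not_exists, not_and] at hmJ
  have := hmJ ((m + 1) / 2).toNat
  rw [Int.odd_iff] at ho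
  simp only [mem_Icc] at hm
  obtain rfl : m = 2 * k' + 1 := by omega
  obtain rfl : p = k' := by omega
  rw [totalDiff_of_F F Ka rfl (by ring), hFtop, lcast_zero, LinearMap.zero_comp]

theorem sum_blockB_comp_blockA {k' q q' : ℕ} (hFneg : F (-1) = 0) (hq : q ≤ k')
    (hq' : q' ≤ k') :
    ∑ p ∈ range (k' + 1), (blockB F Ka q p).comp (blockA F Ka k' p q')
      = ∑ m ∈ Icc (2 * (q' : ℤ) - 1 - 1) (2 * q - 1 + 1),
          (totalDiff F Ka m (2 * q - 1)).comp (totalDiff F Ka (2 * q' - 1) m) := by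
  have hinj : Set.InjOn (fun p : ℕ => 2 * (p : ℤ)) (range (k' + 1)) :=
    fun x _ y _ h => by simp only at h; omega
  rw [← sum_totalDiff_comp_totalDiff_eq_sum_Icc F Ka ((range (k' + 1)).image _), sum_image hinj]
  · refine sum_congr rfl fun p _ => ?_
    rw [blockA_eq_totalDiff F Ka hq', blockB_eq_totalDiff]
  intro m hm hmJ
  rcases Int.even_or_odd (m - (2 * q' - 1)) with he | ho
  · exact totalDiff_comp_totalDiff_eq_zero F Ka (.inr (.inr (.inl he)))
  simp only [mem_image, mem_range, not_exists, not_and] at hmJ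
  have := hmJ (m / 2).toNat
  rw [Int.odd_iff] at ho
  simp only [mem_Icc] at hm
  rw [totalDiff_of_F F Ka (i := -1) (s := 2 * q' - 1) (t := m) (by omega) (by omega), hFneg,
    lcast_zero, LinearMap.comp_zero]

end Blocks

end

/-- the block matrices `(A, B)` form a matrix factorization of `w`. -/
theorem statement3 {R : Type*} [CommRing R] (w : R) {M : ℤ → Type*}
    [∀ i, AddCommGroup (M i)] [∀ i, Module R (M i)]
    (F : ∀ i : ℤ, M i →ₗ[R] M (i - 1))
    (K : ∀ i : ℤ, M (i - 1) →ₗ[R] M i)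
    (Ka : ∀ (a : ℕ) (i : ℤ), M (i - 1) →ₗ[R] M (i + 2 * a))
    (hK0 : ∀ i : ℤ, Ka 0 i = lcast rfl (show i = i + 2 * ((0 : ℕ) : ℤ) by simp) (K i))
    (k' : ℕ)
    (hcomplex : ∀ j : ℤ, (F (j - 1)).comp (F j) = 0)
    (hhomotopy : ∀ j : ℤ,
      (K j).comp (F j)
        + lcast (show j + 1 - 1 = j by ring) (show j + 1 - 1 = j by ring)
            ((F (j + 1)).comp (K (j + 1)))
      = w • (LinearMap.id : M j →ₗ[R] M j))
    (hrec : ∀ (a : ℕ) (ha : 1 ≤ a) (i : ℤ), Rec F Ka a ha i)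
    (hFneg : F (-1) = 0)
    (hFtop : F (2 * (k' : ℤ) + 1) = 0) :
    (∀ p ≤ k', ∀ p' ≤ k',
      ∑ q ∈ Finset.range (k' + 1),
          (blockA F Ka k' p q).comp (blockB F Ka q p')
        = if h : p = p' then
            lcast rfl (show 2 * (p' : ℤ) = 2 * (p : ℤ) by omega)
              (w • (LinearMap.id : M (2 * (p' : ℤ)) →ₗ[R] M (2 * (p' : ℤ))))
          else 0) ∧
    (∀ q ≤ k', ∀ q' ≤ k',
      ∑ p ∈ Finset.range (k' + 1),
          (blockB F Ka q p).comp (blockA F Ka k' p q')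
        = if h : q = q' then
            lcast rfl (show 2 * (q' : ℤ) - 1 = 2 * (q : ℤ) - 1 by omega)
              (w • (LinearMap.id : M (2 * (q' : ℤ) - 1) →ₗ[R] M (2 * (q' : ℤ) - 1)))
          else 0) := by
  have hD := sum_totalDiff_comp_totalDiff hK0 hcomplex hhomotopy hrec
  refine ⟨fun p hp p' _ => ?_, fun q hq q' hq' => ?_⟩
  · rw [sum_blockA_comp_blockB F Ka hFtop hp, hD]
    rcases eq_or_ne p p' with rfl | hne
    · rw [dif_pos rfl, dif_pos rfl]
    · rw [dif_neg (by omega), dif_neg hne]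
  · rw [sum_blockB_comp_blockA F Ka hFneg hq hq', hD]
    rcases eq_or_ne q q' with rfl | hne
    · rw [dif_pos rfl, dif_pos rfl]
    · rw [dif_neg (by omega), dif_neg hne]
end

section
/- Assume M_i = 0 for all i < −1, every M_i is a projective R-module, F_{j−1} ∘ F_j = 0 for all j ∈ ℤ, ker F_j = range F_{j+1} for all j ≥ 1, and the families K and L are null-homotopies for w₁ and w₂ respectively: K_j ∘ F_j + F_{j+1} ∘ K_{j+1} = w₁·id_{M_j} and L_j ∘ F_j + F_{j+1} ∘ L_{j+1} = w₂·id_{M_j} for all j ∈ ℤ. Then there exists a family of R-linear maps G_i : M_{i−1} → M_{i+2} (i ∈ ℤ) such that K_{i+1} ∘ L_i + L_{i+1} ∘ K_i + F_{i+2} ∘ G_i + G_{i−1} ∘ F_{i−1} = 0 for all i ∈ ℤ. -/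
open LinearMap

theorem Module.Projective.exists_comp_eq_of_range_le {R P M N : Type*} [Semiring R]
    [AddCommMonoid P] [Module R P] [Module.Projective R P] [AddCommMonoid M] [Module R M]
    [AddCommMonoid N] [Module R N] (f : M →ₗ[R] N) (g : P →ₗ[R] N) (h : range g ≤ range f) :
    ∃ l : P →ₗ[R] M, f ∘ₗ l = g := by
  obtain ⟨l, hl⟩ := Module.projective_lifting_property f.rangeRestrict
    (g.codRestrict _ fun x => h ⟨x, rfl⟩) f.surjective_rangeRestrict
  exact ⟨l, LinearMap.ext fun x => congrArg Subtype.val (LinearMap.congr_fun hl x)⟩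

theorem Int.exists_forall_rel_pred_of_step {α : ℤ → Type*} (E : ∀ i, α i → α (i - 1) → Prop)
    (G₀ : ∀ i, α i) (h₀ : ∀ i < 0, E i (G₀ i) (G₀ (i - 1)))
    (step : ∀ i, 0 ≤ i → ∀ g' g'', E (i - 1) g' g'' → ∃ g, E i g g') :
    ∃ G : ∀ i, α i, ∀ i, E i (G i) (G (i - 1)) := by
  classical
  let extend (n : ℕ) (Γ : ∀ i, α i) : ∀ i, α i :=
    Function.update Γ n (if h : ∃ g, E n g (Γ (n - 1)) then h.choose else Γ n)
  -- `Γ n` is final below `n`: the `n`-th step only rewrites the entry at `n`.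
  let Γ (n : ℕ) : ∀ i, α i := Nat.rec G₀ extend n
  have succ_of_ne {n : ℕ} {i : ℤ} (h : i ≠ n) : Γ (n + 1) i = Γ n i :=
    Function.update_of_ne h _ _
  have stable {i : ℤ} {m : ℕ} (hm : i < m) {n : ℕ} (hn : m ≤ n) : Γ n i = Γ m i := by
    induction n, hn using Nat.le_induction with
    | base => rfl
    | succ n hmn ih => rw [succ_of_ne (by omega), ih]
  have good (n : ℕ) : ∀ i < (n : ℤ), E i (Γ n i) (Γ n (i - 1)) := by
    induction n with
    | zero => exact h₀
    | succ n ih =>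
      intro i hi
      obtain hi | rfl : i < n ∨ i = n := by omega
      · rw [succ_of_ne hi.ne, succ_of_ne (by omega)]
        exact ih i hi
      · have hex : ∃ g, E n g (Γ n (n - 1)) :=
          step n (by omega) _ _ (ih (n - 1) (by omega))
        rw [succ_of_ne (i := n - 1) (by omega)]
        change E n (Function.update (Γ n) n _ n) _
        rw [Function.update_self, dif_pos hex]
        exact hex.choose_spec
  refine ⟨fun i => Γ (i + 1).toNat i, fun i => ?_⟩
  show E i (Γ _ i) (Γ (i - 1 + 1).toNat (i - 1))
  rw [← stable (m := (i - 1 + 1).toNat) (n := (i + 1).toNat) (by omega) (by omega)]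
  exact good _ i (by omega)

section Transport

variable {ι κ R : Type*} [Semiring R] {M : κ → Type*} [∀ i, AddCommMonoid (M i)]
  [∀ i, Module R (M i)]

theorem LinearEquiv.cast_refl_apply {i : κ} (h : i = i) (x : M i) :
    LinearEquiv.cast (R := R) h x = x :=
  rfl

theorem LinearEquiv.cast_cast_apply {i j k : κ} (h : i = j) (h' : j = k) (x : M i) :
    LinearEquiv.cast (R := R) h' (LinearEquiv.cast (R := R) h x)
      = LinearEquiv.cast (R := R) (h.trans h') x := by
  subst h h'; rfl

theorem apply_linearEquivCast {a b : ι → κ} (f : ∀ i, M (a i) →ₗ[R] M (b i)) {i j : ι}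
    (h : i = j) (ha : a i = a j) (hb : b i = b j) (x : M (a i)) :
    f j (LinearEquiv.cast (R := R) ha x) = LinearEquiv.cast (R := R) hb (f i x) := by
  subst h; rfl

end Transport

theorem lcast_apply {R : Type*} [CommRing R] {M : ℤ → Type*} [∀ i, AddCommGroup (M i)]
    [∀ i, Module R (M i)] {i i' j j' : ℤ} (hi : i = i') (hj : j = j') (f : M i →ₗ[R] M j)
    (x : M i') :
    lcast hi hj f x = LinearEquiv.cast (R := R) hj (f (LinearEquiv.cast (R := R) hi.symm x)) := by
  subst hi hj; rfl

section NullHomotopy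

variable {R : Type*} [CommRing R] {M : ℤ → Type*} [∀ i, AddCommGroup (M i)] [∀ i, Module R (M i)]
  (F : ∀ j : ℤ, M j →ₗ[R] M (j - 1))

local notation "cast[" h "]" => LinearEquiv.cast (R := R) (M := M) h

def IsNullHomotopy (K : ∀ j : ℤ, M (j - 1) →ₗ[R] M j) (w : R) : Prop :=
  ∀ j : ℤ, (K j).comp (F j) + lcast (show j + 1 - 1 = j by ring) (show j + 1 - 1 = j by ring)
      ((F (j + 1)).comp (K (j + 1))) = w • (LinearMap.id : M j →ₗ[R] M j)

variable {F} in
theorem IsNullHomotopy.apply_apply {K : ∀ j : ℤ, M (j - 1) →ₗ[R] M j} {w : R}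
    (hK : IsNullHomotopy F K w) (j : ℤ) (z : M (j - 1)) :
    F j (K j z) = w • z - K (j - 1) (F (j - 1) z) := by
  have h := LinearMap.congr_fun (hK (j - 1)) z
  simp only [LinearMap.add_apply, comp_apply, lcast_apply, LinearMap.smul_apply, id_apply] at h
  rw [apply_linearEquivCast K (show j = j - 1 + 1 by ring) (show j - 1 = j - 1 + 1 - 1 by ring)
      (show j = j - 1 + 1 by ring),
    apply_linearEquivCast F (show j = j - 1 + 1 by ring) (show j = j - 1 + 1 by ring)
      (show j - 1 = j - 1 + 1 - 1 by ring), LinearEquiv.cast_cast_apply,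
    LinearEquiv.cast_refl_apply] at h
  rw [eq_sub_iff_add_eq, add_comm, h]

def anticomm (K L : ∀ j : ℤ, M (j - 1) →ₗ[R] M j) (i : ℤ) : M (i - 1) →ₗ[R] M (i + 1) :=
  (K (i + 1)).comp (lcast rfl (show i = i + 1 - 1 by ring) (L i))
    + (L (i + 1)).comp (lcast rfl (show i = i + 1 - 1 by ring) (K i))

variable {F} in
theorem IsNullHomotopy.apply_anticomm {K L : ∀ j : ℤ, M (j - 1) →ₗ[R] M j} {w₁ w₂ : R}
    (hK : IsNullHomotopy F K w₁) (hL : IsNullHomotopy F L w₂) (i : ℤ) (x : M (i - 1)) :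
    F (i + 1) (anticomm K L i x)
      = cast[show i - 1 + 1 = i + 1 - 1 by ring] (anticomm K L (i - 1) (F (i - 1) x)) := by
  have e₁ : i = i + 1 - 1 := by ring
  have e₂ : i - 1 = i + 1 - 1 - 1 := by ring
  have e₃ : i = i - 1 + 1 := by ring
  have e₄ : i - 1 = i - 1 + 1 - 1 := by ring
  simp only [anticomm, LinearMap.add_apply, comp_apply, lcast_apply, LinearEquiv.cast_refl_apply,
    map_add, hK.apply_apply, hL.apply_apply, apply_linearEquivCast F e₁ e₁ e₂,
    apply_linearEquivCast K e₁ e₂ e₁, apply_linearEquivCast L e₁ e₂ e₁,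
    apply_linearEquivCast K e₃ e₄ e₃, apply_linearEquivCast L e₃ e₄ e₃,
    map_sub, map_smul, LinearEquiv.cast_cast_apply]
  abel

def IsNullHomotopyAt (S : ∀ i : ℤ, M (i - 1) →ₗ[R] M (i + 1)) (i : ℤ)
    (g : M (i - 1) →ₗ[R] M (i + 2)) (g' : M (i - 1 - 1) →ₗ[R] M (i - 1 + 2)) : Prop :=
  S i + lcast rfl (show i + 2 - 1 = i + 1 by ring) ((F (i + 2)).comp g)
    + lcast rfl (show i - 1 + 2 = i + 1 by ring) (g'.comp (F (i - 1))) = 0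

theorem isNullHomotopyAt_zero (S : ∀ i : ℤ, M (i - 1) →ₗ[R] M (i + 1)) {i : ℤ}
    [Subsingleton (M (i - 1))] : IsNullHomotopyAt F S i 0 0 :=
  Subsingleton.elim _ _

theorem exists_isNullHomotopyAt_of_pred {S : ∀ i : ℤ, M (i - 1) →ₗ[R] M (i + 1)} {i : ℤ}
    [Module.Projective R (M (i - 1))] (hcomplex : (F (i - 1 - 1)).comp (F (i - 1)) = 0)
    (hexact : ker (F (i + 1))
      = range (lcast rfl (show i + 1 + 1 - 1 = i + 1 by ring) (F (i + 1 + 1))))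
    (hS : ∀ x, F (i + 1) (S i x)
      = cast[show i - 1 + 1 = i + 1 - 1 by ring] (S (i - 1) (F (i - 1) x)))
    {g' : M (i - 1 - 1) →ₗ[R] M (i - 1 + 2)} {g'' : M (i - 1 - 1 - 1) →ₗ[R] M (i - 1 - 1 + 2)}
    (hg' : IsNullHomotopyAt F S (i - 1) g' g'') : ∃ g, IsNullHomotopyAt F S i g g' := by
  set T : M (i - 1) →ₗ[R] M (i + 1) :=
    -(S i + lcast rfl (show i - 1 + 2 = i + 1 by ring) (g'.comp (F (i - 1)))) with hT_def
  have hT (x : M (i - 1)) : F (i + 1) (T x) = 0 := by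
    have hFF : F (i - 1 - 1) (F (i - 1) x) = 0 := LinearMap.congr_fun hcomplex x
    have hx := LinearMap.congr_fun hg' (F (i - 1) x)
    simp only [LinearMap.add_apply, comp_apply, lcast_apply,
      LinearEquiv.cast_refl_apply, hFF, map_zero, add_zero, LinearMap.zero_apply] at hx
    simp only [hT_def, LinearMap.neg_apply, LinearMap.add_apply, comp_apply, lcast_apply,
      LinearEquiv.cast_refl_apply, map_neg, map_add, hS,
      apply_linearEquivCast F (show i - 1 + 2 = i + 1 by ring) (show i - 1 + 2 = i + 1 by ring)
        (show i - 1 + 2 - 1 = i + 1 - 1 by ring)]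
    rw [neg_eq_zero, ← map_zero cast[show i - 1 + 1 = i + 1 - 1 by ring], ← hx, map_add,
      LinearEquiv.cast_cast_apply]
  obtain ⟨g, hg⟩ := Module.Projective.exists_comp_eq_of_range_le _ T <| by
    rw [← hexact]
    rintro _ ⟨x, rfl⟩
    exact hT x
  refine ⟨lcast rfl (show i + 1 + 1 = i + 2 by ring) g, LinearMap.ext fun x => ?_⟩
  have hx := LinearMap.congr_fun hg x
  simp only [comp_apply, lcast_apply, LinearEquiv.cast_refl_apply] at hx
  simp only [LinearMap.add_apply, comp_apply, lcast_apply,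
    LinearEquiv.cast_refl_apply, LinearMap.zero_apply]
  rw [apply_linearEquivCast F (show i + 1 + 1 = i + 2 by ring) (show i + 1 + 1 = i + 2 by ring)
    (show i + 1 + 1 - 1 = i + 2 - 1 by ring), LinearEquiv.cast_cast_apply, hx]
  simp only [hT_def, LinearMap.neg_apply, LinearMap.add_apply, comp_apply, lcast_apply,
    LinearEquiv.cast_refl_apply]
  abel

end NullHomotopy

/-- existence of the homotopies `G_i` linking the two null-homotopies. -/
theorem statement6 {R : Type*} [CommRing R] (w₁ w₂ : R) {M : ℤ → Type*}
    [∀ i, AddCommGroup (M i)] [∀ i, Module R (M i)]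
    (F : ∀ j : ℤ, M j →ₗ[R] M (j - 1))
    (K L : ∀ j : ℤ, M (j - 1) →ₗ[R] M j)
    (hzero : ∀ i : ℤ, i < -1 → Subsingleton (M i))
    (hproj : ∀ i : ℤ, Module.Projective R (M i))
    (hcomplex : ∀ j : ℤ, (F (j - 1)).comp (F j) = 0)
    (hexact : ∀ j : ℤ, 1 ≤ j →
      LinearMap.ker (F j)
        = LinearMap.range (lcast rfl (show j + 1 - 1 = j by ring) (F (j + 1))))
    (hK : ∀ j : ℤ,
      (K j).comp (F j)
        + lcast (show j + 1 - 1 = j by ring) (show j + 1 - 1 = j by ring)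
            ((F (j + 1)).comp (K (j + 1)))
      = w₁ • (LinearMap.id : M j →ₗ[R] M j))
    (hL : ∀ j : ℤ,
      (L j).comp (F j)
        + lcast (show j + 1 - 1 = j by ring) (show j + 1 - 1 = j by ring)
            ((F (j + 1)).comp (L (j + 1)))
      = w₂ • (LinearMap.id : M j →ₗ[R] M j)) :
    ∃ G : ∀ i : ℤ, M (i - 1) →ₗ[R] M (i + 2),
      ∀ i : ℤ,
        (K (i + 1)).comp (lcast rfl (show i = i + 1 - 1 by ring) (L i))
          + (L (i + 1)).comp (lcast rfl (show i = i + 1 - 1 by ring) (K i))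
          + lcast rfl (show i + 2 - 1 = i + 1 by ring) ((F (i + 2)).comp (G i))
          + lcast rfl (show i - 1 + 2 = i + 1 by ring) ((G (i - 1)).comp (F (i - 1)))
        = 0 := by
  refine Int.exists_forall_rel_pred_of_step (α := fun i => M (i - 1) →ₗ[R] M (i + 2))
    (IsNullHomotopyAt F (anticomm K L)) 0 (fun i hi => ?_) (fun i hi g' g'' hg' => ?_)
  · have := hzero (i - 1) (by omega)
    exact isNullHomotopyAt_zero F _
  · have := hproj (i - 1)
    exact exists_isNullHomotopyAt_of_pred F (hcomplex _) (hexact _ (by omega))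
      (IsNullHomotopy.apply_anticomm hK hL i) hg'
end

section
/- Let d ∈ ℕ, let (A, B) be an asymptotically periodic presentation of size n with levels a, b : Fin n → ℕ and shift d, and let (A′, B′) be an asymptotically periodic presentation of size n′ with levels a′, b′ : Fin n′ → ℕ and the same shift d. Let E and F be arbitrary n×n′ matrices over R and form the block matrices A″ = [[A, E],[0, A′]] and B″ = [[B, F],[0, B′]] of size n+n′. Then there exists k₀ ∈ ℕ such that for all k ≥ k₀ the pair (A″, B″) is an asymptotically periodic presentation with levels (a, a′+k) and (b, b′+k) and shift d: for every pair (x, x′) with x_i ∈ P^{a_i} for all i and x′_j ∈ P^{a′_j + k} for all j, the vector A″·(x, x′) has its first n components in P^{b_i} and last n′ components in P^{b′_j + k}; and for every (y, y′) with y_i ∈ P^{b_i} and y′_j ∈ P^{b′_j + k}, the vector B″·(y, y′) has its first n components in P^{a_i + d} and last n′ components in P^{a′_j + k + d}. -/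
/-! The `P`-adic level conditions are entrywise, so the only new entries of the block matrices
are those of the corner blocks `E` and `F`. Raising the levels of the second summand by `k`
leaves the diagonal conditions unchanged (the shift cancels in `b' j + k - (a' l + k)`) and
turns the condition on `E` and `F` into `P^⟨b i - a' j - k⟩` and `P^⟨a i + d - b' j - k⟩`,
which is the whole ring `R` as soon as `k` exceeds every `b i` and every `a i + d`. -/

/-- `P^⟨n⟩ = P^{max(n,0)}` for an integer `n` (so `P^⟨n⟩ = R` when `n ≤ 0`). -/
def Ideal.zpowNat {R : Type*} [CommRing R] (P : Ideal R) (n : ℤ) : Ideal R :=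
  P ^ n.toNat

namespace Ideal

variable {R : Type*} [CommRing R] (P : Ideal R)

theorem zpowNat_of_nonpos {n : ℤ} (hn : n ≤ 0) : P.zpowNat n = ⊤ := by
  rw [zpowNat, Int.toNat_of_nonpos hn, pow_zero, one_eq_top]

theorem mul_mem_pow_of_mem_zpowNat {s t : ℕ} {u v : R} (hu : u ∈ P.zpowNat (t - s))
    (hv : v ∈ P ^ s) : u * v ∈ P ^ t := by
  have hle : t ≤ ((t : ℤ) - s).toNat + s := by omega
  exact pow_le_pow_right hle (pow_add P _ s ▸ mul_mem_mul hu hv)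

end Ideal

namespace Matrix

variable {R : Type*} [CommRing R] (P : Ideal R)
variable {m n m' n' : Type*}

theorem mulVec_mem_pow [Fintype n] {M : Matrix m n R} {s : n → ℕ} {t : m → ℕ}
    (hM : ∀ i j, M i j ∈ P.zpowNat ((t i : ℤ) - s j)) {x : n → R}
    (hx : ∀ j, x j ∈ P ^ s j) (i : m) : (M *ᵥ x) i ∈ P ^ t i :=
  Ideal.sum_mem _ fun j _ => P.mul_mem_pow_of_mem_zpowNat (hM i j) (hx j)

theorem fromBlocks_mem_zpowNat {A : Matrix m n R} {A' : Matrix m' n' R} (E : Matrix m n' R)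
    {s : n → ℕ} {t : m → ℕ} {s' : n' → ℕ} {t' : m' → ℕ}
    (hA : ∀ i j, A i j ∈ P.zpowNat ((t i : ℤ) - s j))
    (hA' : ∀ i j, A' i j ∈ P.zpowNat ((t' i : ℤ) - s' j)) {k : ℕ} (hk : ∀ i, t i ≤ k) :
    ∀ i j, fromBlocks A E 0 A' i j ∈
      P.zpowNat ((Sum.elim t (t' · + k) i : ℕ) - (Sum.elim s (s' · + k) j : ℕ))
  | .inl i, .inl j => hA i j
  | .inl i, .inr j => by
      have := hk i
      rw [P.zpowNat_of_nonpos (by simp only [Sum.elim_inl, Sum.elim_inr]; omega)]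
      exact Submodule.mem_top
  | .inr _, .inl _ => zero_mem _
  | .inr i, .inr j => by simpa using hA' i j

theorem fromBlocks_mulVec_mem_pow [Fintype n] [Fintype n'] {A : Matrix m n R}
    {A' : Matrix m' n' R} (E : Matrix m n' R)
    {s : n → ℕ} {t : m → ℕ} {s' : n' → ℕ} {t' : m' → ℕ}
    (hA : ∀ i j, A i j ∈ P.zpowNat ((t i : ℤ) - s j))
    (hA' : ∀ i j, A' i j ∈ P.zpowNat ((t' i : ℤ) - s' j)) {k : ℕ} (hk : ∀ i, t i ≤ k)
    {x : n → R} {x' : n' → R} (hx : ∀ j, x j ∈ P ^ s j)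
    (hx' : ∀ j, x' j ∈ P ^ (s' j + k)) :
    (∀ i, (fromBlocks A E 0 A' *ᵥ Sum.elim x x') (.inl i) ∈ P ^ t i) ∧
      ∀ i, (fromBlocks A E 0 A' *ᵥ Sum.elim x x') (.inr i) ∈ P ^ (t' i + k) := by
  have h := mulVec_mem_pow P (fromBlocks_mem_zpowNat P E hA hA' hk) (x := Sum.elim x x')
    (Sum.forall.2 ⟨hx, hx'⟩)
  exact ⟨fun i => h (.inl i), fun i => h (.inr i)⟩

end Matrix

/-- block extensions of asymptotically periodic presentations are
asymptotically periodic after a sufficiently large shift of the second levels. -/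
theorem statement9 {R : Type*} [CommRing R] (P : Ideal R)
    {n n' : ℕ} (d : ℕ)
    (A B : Matrix (Fin n) (Fin n) R) (A' B' : Matrix (Fin n') (Fin n') R)
    (a b : Fin n → ℕ) (a' b' : Fin n' → ℕ)
    (hA : ∀ i j, A i j ∈ P.zpowNat ((b i : ℤ) - (a j : ℤ)))
    (hB : ∀ i j, B i j ∈ P.zpowNat ((a i : ℤ) + (d : ℤ) - (b j : ℤ)))
    (hA' : ∀ i j, A' i j ∈ P.zpowNat ((b' i : ℤ) - (a' j : ℤ)))
    (hB' : ∀ i j, B' i j ∈ P.zpowNat ((a' i : ℤ) + (d : ℤ) - (b' j : ℤ)))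
    (E F : Matrix (Fin n) (Fin n') R) :
    ∃ k₀ : ℕ, ∀ k : ℕ, k₀ ≤ k →
      (∀ (x : Fin n → R) (x' : Fin n' → R),
        (∀ i, x i ∈ P ^ (a i)) → (∀ j, x' j ∈ P ^ (a' j + k)) →
        (∀ i, (Matrix.fromBlocks A E 0 A').mulVec (Sum.elim x x') (Sum.inl i)
            ∈ P ^ (b i)) ∧
        (∀ j, (Matrix.fromBlocks A E 0 A').mulVec (Sum.elim x x') (Sum.inr j)
            ∈ P ^ (b' j + k))) ∧
      (∀ (y : Fin n → R) (y' : Fin n' → R),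
        (∀ i, y i ∈ P ^ (b i)) → (∀ j, y' j ∈ P ^ (b' j + k)) →
        (∀ i, (Matrix.fromBlocks B F 0 B').mulVec (Sum.elim y y') (Sum.inl i)
            ∈ P ^ (a i + d)) ∧
        (∀ j, (Matrix.fromBlocks B F 0 B').mulVec (Sum.elim y y') (Sum.inr j)
            ∈ P ^ (a' j + k + d))) := by
  refine ⟨Finset.univ.sup fun i => max (b i) (a i + d), fun k hk => ?_⟩
  have hmax (i : Fin n) : max (b i) (a i + d) ≤ k :=
    (Finset.le_sup (f := fun i => max (b i) (a i + d)) (Finset.mem_univ i)).trans hk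
  have hB₀ : ∀ i j, B i j ∈ P.zpowNat (((a i + d : ℕ) : ℤ) - b j) := by exact_mod_cast hB
  have hB₀' : ∀ i j, B' i j ∈ P.zpowNat (((a' i + d : ℕ) : ℤ) - b' j) := by
    exact_mod_cast hB'
  refine ⟨fun x x' hx hx' => ?_, fun y y' hy hy' => ?_⟩
  · exact Matrix.fromBlocks_mulVec_mem_pow P E hA hA' (fun i => (le_max_left _ _).trans (hmax i))
      hx hx'
  · simpa only [add_right_comm _ d k] using Matrix.fromBlocks_mulVec_mem_pow P F hB₀ hB₀'
      (fun i => (le_max_right _ _).trans (hmax i)) hy hy'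
end
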